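/- arXiv:2603.19479 — 4 statements merged into one kernel-verified Lean document; each statement's English description precedes it below -/
import Mathlib

section
/- Let P = L⁽¹⁾ ×_M ⋯ ×_M L⁽ⁿ⁾ be a fiber product of polytopes in standard form and let x = (x⁽¹⁾, …, x⁽ⁿ⁾) ∈ P. Then x is an extreme point of P if and only if the set {(y⁽¹⁾, …, y⁽ⁿ⁾) : y⁽ⁱ⁾ ∈ Conv(Vsupp(x⁽ⁱ⁾)) for all i, and f₁(y⁽¹⁾) = ⋯ = fₙ(y⁽ⁿ⁾)} consists only of the point x. -/
/-!
A vertex `w` of a standard-form polytope `L` is determined by its support: if `u ∈ L` and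
`supp u ⊆ supp w`, then `w + t • (w - u)` stays in `L` for small `t > 0`, so `w` lies strictly
inside a segment ending at `u`, forcing `u = w`. Hence `L` has finitely many vertices, and by
Krein–Milman the compact face `{w ∈ L | supp w ⊆ supp x}` is the convex hull of its vertices,
which form `Vsupp L x`. The set in the statement is therefore the set of points of the fiber
product whose components have supports inside those of `x`. The same segment argument, run in
the fiber product (affine maps commute with extending a segment beyond `x`), shows that a vertex
`x` is the only such point; conversely, by nonnegativity, the endpoints of an open segment
through `x` have supports inside those of `x`.
-/

/-- The support of a vector: the set of indices with nonzero coordinate. -/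
def supp {d : ℕ} (x : Fin d → ℝ) : Set (Fin d) := {i | x i ≠ 0}

/-- A polytope in standard form: a bounded intersection of an affine subspace
(given by linear equations `A x = b`) with the nonnegative orthant. -/
def StdForm {d : ℕ} (L : Set (Fin d → ℝ)) : Prop :=
  Bornology.IsBounded L ∧
    ∃ (k : ℕ) (A : Matrix (Fin k) (Fin d) ℝ) (b : Fin k → ℝ),
      L = {x | A.mulVec x = b ∧ ∀ i, 0 ≤ x i}

/-- A (general) polytope: a bounded intersection of finitely many closed half-spaces. -/
def IsPolytope {d : ℕ} (M : Set (Fin d → ℝ)) : Prop :=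
  Bornology.IsBounded M ∧
    ∃ (k : ℕ) (A : Matrix (Fin k) (Fin d) ℝ) (b : Fin k → ℝ),
      M = {x | ∀ i, A.mulVec x i ≤ b i}

/-- The vertex support of `x` in `L`: the set of extreme points (vertices) of `L`
whose support is contained in the support of `x`. -/
def Vsupp {d : ℕ} (L : Set (Fin d → ℝ)) (x : Fin d → ℝ) : Set (Fin d → ℝ) :=
  {y ∈ Set.extremePoints ℝ L | supp y ⊆ supp x}

/-- The fiber product `L⁽¹⁾ ×_M ⋯ ×_M L⁽ⁿ⁾` of the polytopes `L i` over the affine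
maps `f i`: tuples that are componentwise in the `L i` and whose images under the
`f i` all agree. -/
def FiberProd {n e : ℕ} (d : Fin n → ℕ) (L : ∀ i, Set (Fin (d i) → ℝ))
    (f : ∀ i, (Fin (d i) → ℝ) →ᵃ[ℝ] (Fin e → ℝ)) : Set (∀ i, Fin (d i) → ℝ) :=
  {x | (∀ i, x i ∈ L i) ∧ ∀ i j, f i (x i) = f j (x j)}

open Filter Topology

lemma eventually_nonneg_add_smul_sub {ι : Type*} [Finite ι] {w u : ι → ℝ} (hw : 0 ≤ w)
    (hu : ∀ j, w j = 0 → u j = 0) : ∀ᶠ t in 𝓝 (0 : ℝ), 0 ≤ w + t • (w - u) := by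
  refine (eventually_all.2 fun j => ?_).mono fun t ht j => ht j
  rcases (hw j).eq_or_lt with h | h
  · exact .of_forall fun t => by simp [← h, hu j h.symm]
  · have hcont : Continuous fun t : ℝ => w j + t * (w j - u j) := by fun_prop
    filter_upwards [(hcont.tendsto 0).eventually (lt_mem_nhds (by simpa using h))] with t ht
    simpa using ht.le

lemma exists_pos_of_eventually_nhds_zero {p : ℝ → Prop} (h : ∀ᶠ t in 𝓝 0, p t) :
    ∃ t > 0, p t :=
  ((h.filter_mono nhdsWithin_le_nhds).and (self_mem_nhdsWithin (s := Set.Ioi 0))).exists.imp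
    fun _ ht => ⟨ht.2, ht.1⟩

lemma mem_openSegment_add_smul_sub {E : Type*} [AddCommGroup E] [Module ℝ E] (x y : E)
    {t : ℝ} (ht : 0 < t) : x ∈ openSegment ℝ y (x + t • (x - y)) := by
  refine ⟨t / (1 + t), 1 / (1 + t), by positivity, by positivity, by field_simp; ring, ?_⟩
  match_scalars <;> field_simp
  ring

lemma eq_of_mem_extremePoints_of_add_smul_sub_mem {E : Type*} [AddCommGroup E] [Module ℝ E]
    {K : Set E} {x y : E} (hx : x ∈ K.extremePoints ℝ) (hy : y ∈ K) {t : ℝ} (ht : 0 < t)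
    (h : x + t • (x - y) ∈ K) : y = x :=
  hx.2 hy h (mem_openSegment_add_smul_sub x y ht)

lemma AffineMap.map_add_smul_sub {E F : Type*} [AddCommGroup E] [Module ℝ E] [AddCommGroup F]
    [Module ℝ F] (f : E →ᵃ[ℝ] F) (x y : E) (t : ℝ) :
    f (x + t • (x - y)) = f x + t • (f x - f y) := by
  have hline : x + t • (x - y) = lineMap x y (-t) := by
    rw [lineMap_apply_module']
    module
  rw [hline, apply_lineMap, lineMap_apply_module']
  module

lemma supp_subset_of_mem_openSegment {d : ℕ} {y z p : Fin d → ℝ} (hy : 0 ≤ y) (hz : 0 ≤ z)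
    (hp : p ∈ openSegment ℝ y z) : supp y ⊆ supp p := by
  obtain ⟨a, b, ha, hb, -, rfl⟩ := hp
  intro j hyj hpj
  have : a * y j + b * z j = 0 := by simpa using hpj
  exact hyj (by nlinarith [show 0 ≤ y j from hy j, show 0 ≤ z j from hz j])

lemma supp_subset_iff {d : ℕ} {x y : Fin d → ℝ} : supp y ⊆ supp x ↔ ∀ j, x j = 0 → y j = 0 :=
  forall_congr' fun _ => not_imp_not

lemma isClosed_setOf_supp_subset {d : ℕ} (x : Fin d → ℝ) :
    IsClosed {w : Fin d → ℝ | supp w ⊆ supp x} := by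
  simp only [supp_subset_iff, Set.ofPred_forall]
  exact isClosed_iInter fun j => isClosed_iInter fun _ =>
    isClosed_eq (continuous_apply j) continuous_const

def suppFace {d : ℕ} (L : Set (Fin d → ℝ)) (x : Fin d → ℝ) : Set (Fin d → ℝ) :=
  {w ∈ L | supp w ⊆ supp x}

namespace StdForm

variable {d : ℕ} {L : Set (Fin d → ℝ)}

lemma nonneg (hL : StdForm L) {w : Fin d → ℝ} (hw : w ∈ L) : 0 ≤ w := by
  obtain ⟨-, k, A, b, rfl⟩ := hL
  exact hw.2

lemma isClosed (hL : StdForm L) : IsClosed L := by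
  obtain ⟨-, k, A, b, rfl⟩ := hL
  rw [Set.ofPred_and, Set.ofPred_forall]
  exact (isClosed_eq (Matrix.mulVecLin A).continuous_of_finiteDimensional continuous_const).inter
    (isClosed_iInter fun i => isClosed_le continuous_const (continuous_apply i))

lemma convex (hL : StdForm L) : Convex ℝ L := by
  obtain ⟨-, k, A, b, rfl⟩ := hL
  intro u hu w hw a c ha hc hac
  refine ⟨?_, fun i => ?_⟩
  · rw [Matrix.mulVec_add, Matrix.mulVec_smul, Matrix.mulVec_smul, hu.1, hw.1, ← add_smul, hac,
      one_smul]
  · simpa using add_nonneg (mul_nonneg ha (hu.2 i)) (mul_nonneg hc (hw.2 i))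

lemma eventually_add_smul_sub_mem (hL : StdForm L) {w u : Fin d → ℝ} (hw : w ∈ L) (hu : u ∈ L)
    (hsupp : supp u ⊆ supp w) : ∀ᶠ t in 𝓝 (0 : ℝ), w + t • (w - u) ∈ L := by
  obtain ⟨-, k, A, b, rfl⟩ := hL
  filter_upwards [eventually_nonneg_add_smul_sub hw.2 (supp_subset_iff.1 hsupp)] with t ht
  refine ⟨?_, ht⟩
  rw [Matrix.mulVec_add, Matrix.mulVec_smul, Matrix.mulVec_sub, hw.1, hu.1, sub_self, smul_zero,
    add_zero]

lemma eq_of_mem_extremePoints (hL : StdForm L) {w u : Fin d → ℝ} (hw : w ∈ L.extremePoints ℝ)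
    (hu : u ∈ L) (hsupp : supp u ⊆ supp w) : u = w := by
  obtain ⟨t, ht, hmem⟩ :=
    exists_pos_of_eventually_nhds_zero (hL.eventually_add_smul_sub_mem hw.1 hu hsupp)
  exact eq_of_mem_extremePoints_of_add_smul_sub_mem hw hu ht hmem

lemma finite_extremePoints (hL : StdForm L) : (L.extremePoints ℝ).Finite :=
  Set.Finite.of_finite_image (Set.toFinite _) fun _ hu _ hw h =>
    hL.eq_of_mem_extremePoints hw hu.1 h.le

lemma isExtreme_suppFace (hL : StdForm L) (x : Fin d → ℝ) : IsExtreme ℝ L (suppFace L x) :=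
  ⟨fun _ hw => hw.1, fun _ hy _ hz _ hp hseg =>
    ⟨hy, (supp_subset_of_mem_openSegment (hL.nonneg hy) (hL.nonneg hz) hseg).trans hp.2⟩⟩

lemma isCompact_suppFace (hL : StdForm L) (x : Fin d → ℝ) : IsCompact (suppFace L x) :=
  Metric.isCompact_of_isClosed_isBounded (hL.isClosed.inter (isClosed_setOf_supp_subset x))
    (hL.1.subset fun _ hw => hw.1)

lemma convex_suppFace (hL : StdForm L) (x : Fin d → ℝ) : Convex ℝ (suppFace L x) := by
  refine hL.convex.inter fun u hu w hw a c _ _ _ => supp_subset_iff.2 fun j hj => ?_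
  simp [supp_subset_iff.1 hu j hj, supp_subset_iff.1 hw j hj]

lemma convexHull_Vsupp (hL : StdForm L) (x : Fin d → ℝ) :
    convexHull ℝ (Vsupp L x) = suppFace L x := by
  have hface := hL.isExtreme_suppFace x
  have hext : Vsupp L x = (suppFace L x).extremePoints ℝ := by
    rw [hface.extremePoints_eq]
    exact Set.ext fun w => ⟨fun h => ⟨⟨h.1.1, h.2⟩, h.1⟩, fun h => ⟨h.2, h.1.2⟩⟩
  have hclosed : IsClosed (convexHull ℝ ((suppFace L x).extremePoints ℝ)) :=
    (hL.finite_extremePoints.subset hface.extremePoints_subset_extremePoints).isClosed_convexHull ℝ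
  rw [hext, ← hclosed.closure_eq]
  exact closure_convexHull_extremePoints (hL.isCompact_suppFace x) (hL.convex_suppFace x)

end StdForm

lemma exists_pos_add_smul_sub_mem_fiberProd {n e : ℕ} {d : Fin n → ℕ}
    {L : ∀ i, Set (Fin (d i) → ℝ)} (hL : ∀ i, StdForm (L i))
    {f : ∀ i, (Fin (d i) → ℝ) →ᵃ[ℝ] (Fin e → ℝ)} {x y : ∀ i, Fin (d i) → ℝ}
    (hx : x ∈ FiberProd d L f) (hy : y ∈ FiberProd d L f)
    (hsupp : ∀ i, supp (y i) ⊆ supp (x i)) :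
    ∃ t : ℝ, 0 < t ∧ x + t • (x - y) ∈ FiberProd d L f := by
  refine exists_pos_of_eventually_nhds_zero ?_
  filter_upwards [eventually_all.2 fun i =>
    (hL i).eventually_add_smul_sub_mem (hx.1 i) (hy.1 i) (hsupp i)] with t ht
  refine ⟨ht, fun i j => ?_⟩
  change f i (x i + t • (x i - y i)) = f j (x j + t • (x j - y j))
  rw [AffineMap.map_add_smul_sub, AffineMap.map_add_smul_sub, hx.2 i j, hy.2 i j]

theorem stmt_6_general {n e : ℕ} (d : Fin n → ℕ)
    (L : ∀ i, Set (Fin (d i) → ℝ)) (hL : ∀ i, StdForm (L i))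
    (f : ∀ i, (Fin (d i) → ℝ) →ᵃ[ℝ] (Fin e → ℝ))
    (x : ∀ i, Fin (d i) → ℝ) :
    x ∈ Set.extremePoints ℝ (FiberProd d L f) ↔
      {y : ∀ i, Fin (d i) → ℝ |
        (∀ i, y i ∈ convexHull ℝ (Vsupp (L i) (x i))) ∧
          ∀ i j, f i (y i) = f j (y j)} = {x} := by
  have hS : {y : ∀ i, Fin (d i) → ℝ |
      (∀ i, y i ∈ convexHull ℝ (Vsupp (L i) (x i))) ∧ ∀ i j, f i (y i) = f j (y j)} =
      {y ∈ FiberProd d L f | ∀ i, supp (y i) ⊆ supp (x i)} := by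
    ext y
    simp only [(hL _).convexHull_Vsupp, suppFace, FiberProd, Set.mem_ofPred_eq, forall_and]
    tauto
  rw [hS, Set.eq_singleton_iff_unique_mem]
  constructor
  · intro hext
    refine ⟨⟨hext.1, fun i => subset_rfl⟩, fun y ⟨hy, hsupp⟩ => ?_⟩
    obtain ⟨t, ht, hmem⟩ := exists_pos_add_smul_sub_mem_fiberProd hL hext.1 hy hsupp
    exact eq_of_mem_extremePoints_of_add_smul_sub_mem hext hy ht hmem
  · rintro ⟨⟨hx, -⟩, hunique⟩
    refine ⟨hx, fun y hy z hz ⟨a, b, ha, hb, hab, hxyz⟩ => hunique y ⟨hy, fun i => ?_⟩⟩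
    exact supp_subset_of_mem_openSegment ((hL i).nonneg (hy.1 i)) ((hL i).nonneg (hz.1 i))
      ⟨a, b, ha, hb, hab, congrFun hxyz i⟩

theorem stmt_6 {n e : ℕ} (d : Fin n → ℕ)
    (L : ∀ i, Set (Fin (d i) → ℝ)) (hL : ∀ i, StdForm (L i))
    (M : Set (Fin e → ℝ)) (hM : IsPolytope M)
    (f : ∀ i, (Fin (d i) → ℝ) →ᵃ[ℝ] (Fin e → ℝ))
    (hf : ∀ i, ∀ y ∈ L i, f i y ∈ M)
    (x : ∀ i, Fin (d i) → ℝ) (hx : x ∈ FiberProd d L f) :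
    x ∈ Set.extremePoints ℝ (FiberProd d L f) ↔
      {y : ∀ i, Fin (d i) → ℝ |
        (∀ i, y i ∈ convexHull ℝ (Vsupp (L i) (x i))) ∧
          ∀ i j, f i (y i) = f j (y j)} = {x} :=
  stmt_6_general d L hL f x
end

section
/- Let L⁽¹⁾, …, L⁽ⁿ⁾ be polytopes in standard form and f_i : ℝ^{d_i} → ℝ^e affine maps with f_i(L⁽ⁱ⁾) ⊆ M for a polytope M. Suppose A₁, …, Aₙ ⊆ M are sets such that: each A_i is affinely independent; ⋂_{i=1}^n Conv(A_i) consists of exactly one point u; and for each i there is a finite set Ã_i of extreme points of L⁽ⁱ⁾ whose convex hull is an exposed face of L⁽ⁱ⁾ such that f_i restricted to Ã_i is a bijection onto A_i. For each j, let (α_z)_{z∈A_j} be nonnegative reals summing to 1 with u = Σ_{z∈A_j} α_z z, and define x⁽ʲ⁾ := Σ_{y∈Ã_j} α_{f_j(y)} y. Then x = (x⁽¹⁾, …, x⁽ⁿ⁾) lies in the fiber product L⁽¹⁾ ×_M ⋯ ×_M L⁽ⁿ⁾ and is an extreme point of it. -/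
/-! `x⁽ⁱ⁾` lies in the exposed face `Conv(Ãᵢ)` of `L⁽ⁱ⁾` and `fᵢ(x⁽ⁱ⁾) = u`. Since `fᵢ` maps `Ãᵢ`
bijectively onto the affinely independent set `Aᵢ`, it is injective on `Conv(Ãᵢ)`. The product of
the faces `Conv(Ãᵢ)` is a face of `∏ L⁽ⁱ⁾`, so its trace on the fiber product is a face of the
fiber product. Every point of that trace has its common image in `⋂ Conv(Aᵢ) = {u}`, hence equals
`x` by injectivity; a face that is a single point is an extreme point. -/

open Set

section Extreme

variable {𝕜 : Type*} [Semiring 𝕜] [PartialOrder 𝕜]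

theorem IsExtreme.inter_of_subset {E : Type*} [AddCommMonoid E] [SMul 𝕜 E] {A B S : Set E}
    (h : IsExtreme 𝕜 A B) (hS : S ⊆ A) : IsExtreme 𝕜 S (S ∩ B) :=
  ⟨inter_subset_left, fun _ h₁ _ h₂ _ hx hseg =>
    ⟨h₁, h.left_mem_of_mem_openSegment (hS h₁) (hS h₂) hx.2 hseg⟩⟩

theorem IsExtreme.univ_pi {ι : Type*} {E : ι → Type*} [∀ i, AddCommMonoid (E i)]
    [∀ i, Module 𝕜 (E i)] {A B : ∀ i, Set (E i)} (h : ∀ i, IsExtreme 𝕜 (A i) (B i)) :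
    IsExtreme 𝕜 (univ.pi A) (univ.pi B) := by
  refine ⟨pi_mono fun i _ => (h i).subset, fun y hy z hz x hx hseg => ?_⟩
  obtain ⟨a, b, ha, hb, hab, rfl⟩ := hseg
  exact fun i _ => (h i).left_mem_of_mem_openSegment (hy i trivial) (hz i trivial)
    (hx i trivial) ⟨a, b, ha, hb, hab, rfl⟩

end Extreme

theorem Set.BijOn.finsetSum_comp {α β M : Type*} [AddCommMonoid M] {s : Finset α}
    {t : Finset β} {g : α → β} (h : BijOn g s t) (φ : β → M) :
    ∑ a ∈ s, φ (g a) = ∑ b ∈ t, φ b :=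
  Finset.sum_nbij g h.mapsTo h.injOn h.surjOn fun _ _ => rfl

section Affine

variable {k E F : Type*} [Ring k] [AddCommGroup E] [Module k E] [AddCommGroup F] [Module k F]

theorem AffineMap.map_sum_smul_of_sum_eq_one {ι : Type*} (f : E →ᵃ[k] F) {s : Finset ι}
    {w : ι → k} (p : ι → E) (hw : ∑ i ∈ s, w i = 1) :
    f (∑ i ∈ s, w i • p i) = ∑ i ∈ s, w i • f (p i) := by
  rw [← s.affineCombination_eq_linear_combination p w hw, s.map_affineCombination p w hw,
    s.affineCombination_eq_linear_combination _ w hw]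
  rfl

theorem AffineMap.injOn_affineSpan_of_affineIndependent_comp {ι : Type*} [Fintype ι]
    (f : E →ᵃ[k] F) {p : ι → E} (h : AffineIndependent k (f ∘ p)) :
    InjOn f (affineSpan k (range p)) := by
  intro a ha b hb hab
  obtain ⟨wa, hwa, rfl⟩ := eq_affineCombination_of_mem_affineSpan_of_fintype ha
  obtain ⟨wb, hwb, rfl⟩ := eq_affineCombination_of_mem_affineSpan_of_fintype hb
  rw [Finset.map_affineCombination _ _ _ hwa, Finset.map_affineCombination _ _ _ hwb] at hab
  rw [(affineIndependent_iff_eq_of_fintype_affineCombination_eq k _).1 h wa wb hwa hwb hab]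

theorem AffineMap.injOn_convexHull_of_bijOn [PartialOrder k] (f : E →ᵃ[k] F) {S : Set E}
    {T : Set F} [Finite S] (hbij : BijOn f S T) (hT : AffineIndependent k ((↑) : T → F)) :
    InjOn f (convexHull k S) := by
  have : Fintype S := Fintype.ofFinite S
  have hS : AffineIndependent k (f ∘ ((↑) : S → E)) :=
    (affineIndependent_equiv (hbij.equiv f)).2 hT
  refine (f.injOn_affineSpan_of_affineIndependent_comp hS).mono ?_
  rw [Subtype.range_coe]
  exact convexHull_subset_affineSpan S

end Affine

theorem stmt_8_general {n e : ℕ} (d : Fin n → ℕ)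
    (L : ∀ i, Set (Fin (d i) → ℝ))
    (f : ∀ i, (Fin (d i) → ℝ) →ᵃ[ℝ] (Fin e → ℝ))
    (A : Fin n → Finset (Fin e → ℝ))
    (haff : ∀ i, AffineIndependent ℝ ((↑) : ↑(A i : Set (Fin e → ℝ)) → (Fin e → ℝ)))
    (u : Fin e → ℝ) (hu : (⋂ i, convexHull ℝ (A i : Set (Fin e → ℝ))) = {u})
    (Atil : ∀ i, Finset (Fin (d i) → ℝ))
    (hface : ∀ i, IsExposed ℝ (L i) (convexHull ℝ ↑(Atil i)))
    (hbij : ∀ i, Set.BijOn (f i) ↑(Atil i) ↑(A i))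
    (α : ∀ _ : Fin n, (Fin e → ℝ) → ℝ)
    (hα0 : ∀ i, ∀ z ∈ A i, 0 ≤ α i z)
    (hα1 : ∀ i, ∑ z ∈ A i, α i z = 1)
    (hαu : ∀ i, ∑ z ∈ A i, α i z • z = u)
    (x : ∀ i, Fin (d i) → ℝ)
    (hxdef : ∀ i, x i = ∑ y ∈ Atil i, α i (f i y) • y) :
    x ∈ FiberProd d L f ∧ x ∈ Set.extremePoints ℝ (FiberProd d L f) := by
  set F : ∀ i, Set (Fin (d i) → ℝ) := fun i => convexHull ℝ ↑(Atil i)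
  have hw : ∀ i, ∑ y ∈ Atil i, α i (f i y) = 1 := fun i =>
    ((hbij i).finsetSum_comp (α i)).trans (hα1 i)
  have hxF : ∀ i, x i ∈ F i := fun i => hxdef i ▸
    (convex_convexHull ℝ _).sum_mem (fun y hy => hα0 i _ ((hbij i).mapsTo hy)) (hw i)
      fun y hy => subset_convexHull ℝ _ hy
  have hfx : ∀ i, f i (x i) = u := fun i => by
    rw [hxdef i, (f i).map_sum_smul_of_sum_eq_one _ (hw i),
      (hbij i).finsetSum_comp fun z => α i z • z, hαu i]
  have hx : x ∈ FiberProd d L f :=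
    ⟨fun i => (hface i).subset (hxF i), fun i j => (hfx i).trans (hfx j).symm⟩
  have hfF : ∀ i, ∀ y ∈ F i, f i y ∈ convexHull ℝ (A i : Set (Fin e → ℝ)) := fun i y hy => by
    rw [← (hbij i).image_eq, ← AffineMap.image_convexHull]
    exact mem_image_of_mem _ hy
  have hsingle : FiberProd d L f ∩ univ.pi F = {x} := by
    refine subset_antisymm (fun y ⟨hy, hyF⟩ => funext fun i => ?_)
      (singleton_subset_iff.2 ⟨hx, fun i _ => hxF i⟩)
    have hyu : f i (y i) = u := by
      rw [← mem_singleton_iff, ← hu, mem_iInter]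
      exact fun j => hy.2 i j ▸ hfF j _ (hyF j trivial)
    exact (f i).injOn_convexHull_of_bijOn (hbij i) (haff i) (hyF i trivial) (hxF i)
      (hyu.trans (hfx i).symm)
  refine ⟨hx, ?_⟩
  rw [← isExtreme_singleton, ← hsingle]
  exact (IsExtreme.univ_pi fun i => (hface i).isExtreme).inter_of_subset
    fun y hy => mem_univ_pi.2 hy.1

theorem stmt_8 {n e : ℕ} (d : Fin n → ℕ)
    (L : ∀ i, Set (Fin (d i) → ℝ)) (hL : ∀ i, StdForm (L i))
    (M : Set (Fin e → ℝ)) (hM : IsPolytope M)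
    (f : ∀ i, (Fin (d i) → ℝ) →ᵃ[ℝ] (Fin e → ℝ))
    (hf : ∀ i, ∀ y ∈ L i, f i y ∈ M)
    (A : Fin n → Finset (Fin e → ℝ)) (hAM : ∀ i, ↑(A i) ⊆ M)
    (haff : ∀ i, AffineIndependent ℝ ((↑) : ↑(A i : Set (Fin e → ℝ)) → (Fin e → ℝ)))
    (u : Fin e → ℝ) (hu : (⋂ i, convexHull ℝ (A i : Set (Fin e → ℝ))) = {u})
    (Atil : ∀ i, Finset (Fin (d i) → ℝ))
    (hAtilext : ∀ i, ↑(Atil i) ⊆ Set.extremePoints ℝ (L i))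
    (hface : ∀ i, IsExposed ℝ (L i) (convexHull ℝ ↑(Atil i)))
    (hbij : ∀ i, Set.BijOn (f i) ↑(Atil i) ↑(A i))
    (α : ∀ _ : Fin n, (Fin e → ℝ) → ℝ)
    (hα0 : ∀ i, ∀ z ∈ A i, 0 ≤ α i z)
    (hα1 : ∀ i, ∑ z ∈ A i, α i z = 1)
    (hαu : ∀ i, ∑ z ∈ A i, α i z • z = u)
    (x : ∀ i, Fin (d i) → ℝ)
    (hxdef : ∀ i, x i = ∑ y ∈ Atil i, α i (f i y) • y) :
    x ∈ FiberProd d L f ∧ x ∈ Set.extremePoints ℝ (FiberProd d L f) :=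
  stmt_8_general d L f A haff u hu Atil hface hbij α hα0 hα1 hαu x hxdef
end

section
/- Let x = (x⁽¹⁾, …, x⁽ⁿ⁾) be an extreme point of the fiber product L⁽¹⁾ ×_M ⋯ ×_M L⁽ⁿ⁾ of polytopes in standard form, and suppose that for some index j the set Vsupp(x⁽ʲ⁾) is affinely independent. Then f_j is injective on Vsupp(x⁽ʲ⁾) (so |f_j(Vsupp(x⁽ʲ⁾))| = |Vsupp(x⁽ʲ⁾)|) and the set A_j := f_j(Vsupp(x⁽ʲ⁾)) is affinely independent. -/
/-!
A vector `w` in the direction of the affine span of `Vsupp (L j) (x j)` satisfies `A *ᵥ w = 0`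
for the constraint matrix `A` of `L j` and is supported in `supp (x j)`, so `x j ± t • w` stays
in `L j` for small `t > 0`. If moreover the linear part of `f j` kills `w`, moving only the
`j`-th component of `x` by `± t • w` stays in the fiber product, and extremality of `x` forces
`w = 0`. Thus `f j` is injective on the direction of that affine span, and so it preserves the
affine independence of `Vsupp (L j) (x j)`.
-/

open Set Filter Topology Matrix

theorem AffineIndependent.map_of_disjoint {k V P V₂ P₂ ι : Type*} [Ring k]
    [AddCommGroup V] [Module k V] [AddTorsor V P] [AddCommGroup V₂] [Module k V₂]
    [AddTorsor V₂ P₂] {p : ι → P} (hp : AffineIndependent k p) (φ : P →ᵃ[k] P₂)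
    (hφ : Disjoint (vectorSpan k (range p)) (LinearMap.ker φ.linear)) :
    AffineIndependent k (φ ∘ p) := by
  rcases isEmpty_or_nonempty ι with _ | ⟨⟨i₀⟩⟩
  · exact affineIndependent_of_subsingleton k _
  rw [affineIndependent_iff_linearIndependent_vsub _ _ i₀] at hp ⊢
  rw [vectorSpan_range_eq_span_range_vsub_right_ne k p i₀] at hφ
  convert hp.map hφ using 1
  ext i
  simp [φ.linearMap_vsub]

section StdForm

variable {d k : ℕ} {L : Set (Fin d → ℝ)} {A : Matrix (Fin k) (Fin d) ℝ} {b : Fin k → ℝ}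
  {y w : Fin d → ℝ}

theorem eventually_add_smul_mem_stdForm (hL : L = {x | A *ᵥ x = b ∧ ∀ i, 0 ≤ x i})
    (hy : y ∈ L) (hAw : A *ᵥ w = 0) (hw : supp w ⊆ supp y) :
    ∀ᶠ s in 𝓝 (0 : ℝ), y + s • w ∈ L := by
  subst hL
  have hnonneg : ∀ i, ∀ᶠ s in 𝓝 (0 : ℝ), 0 ≤ y i + s * w i := by
    intro i
    rcases (hy.2 i).eq_or_lt with hyi | hyi
    · have hwi : w i = 0 := by_contra fun hwi => hw hwi hyi.symm
      simp [hwi, ← hyi]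
    · have hcont : Tendsto (fun s : ℝ => y i + s * w i) (𝓝 0) (𝓝 (y i)) := by
        simpa using ((continuous_id.mul continuous_const).const_add (y i)).tendsto (0 : ℝ)
      exact (hcont.eventually (lt_mem_nhds hyi)).mono fun _ => le_of_lt
  filter_upwards [eventually_all.2 hnonneg] with s hs
  exact ⟨by simp [mulVec_add, mulVec_smul, hAw, hy.1], hs⟩

theorem mulVec_eq_zero_and_supp_subset_of_mem_vectorSpan_vsupp
    (hL : L = {x | A *ᵥ x = b ∧ ∀ i, 0 ≤ x i}) (hw : w ∈ vectorSpan ℝ (Vsupp L y)) :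
    A *ᵥ w = 0 ∧ supp w ⊆ supp y := by
  have hV : ∀ v ∈ Vsupp L y, A *ᵥ v = b ∧ ∀ i, y i = 0 → v i = 0 := fun v hv => by
    have hvL : v ∈ L := extremePoints_subset hv.1
    rw [hL] at hvL
    exact ⟨hvL.1, fun i hyi => by_contra fun hvi => hv.2 hvi hyi⟩
  suffices A *ᵥ w = 0 ∧ ∀ i, y i = 0 → w i = 0 from
    ⟨this.1, fun i hwi hyi => hwi (this.2 i hyi)⟩
  induction hw using Submodule.span_induction with
  | mem _ h =>
    obtain ⟨u, hu, v, hv, rfl⟩ := h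
    exact ⟨by simp [mulVec_sub, (hV u hu).1, (hV v hv).1],
      fun i hyi => by simp [(hV u hu).2 i hyi, (hV v hv).2 i hyi]⟩
  | zero => simp
  | add u v _ _ hu hv =>
    exact ⟨by simp [mulVec_add, hu.1, hv.1], fun i hyi => by simp [hu.2 i hyi, hv.2 i hyi]⟩
  | smul c u _ hu =>
    exact ⟨by simp [mulVec_smul, hu.1], fun i hyi => by simp [hu.2 i hyi]⟩

end StdForm

section FiberProd

variable {n e : ℕ} {d : Fin n → ℕ} {L : ∀ i, Set (Fin (d i) → ℝ)}
  {f : ∀ i, (Fin (d i) → ℝ) →ᵃ[ℝ] (Fin e → ℝ)} {x : ∀ i, Fin (d i) → ℝ} {j : Fin n}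
  {w : Fin (d j) → ℝ}

theorem add_single_mem_fiberProd (hx : x ∈ FiberProd d L f) (hw : (f j).linear w = 0)
    (hxw : x j + w ∈ L j) : x + Pi.single j w ∈ FiberProd d L f := by
  have hf : ∀ i, f i ((x + Pi.single j w : ∀ i, Fin (d i) → ℝ) i) = f i (x i) := by
    intro i
    rcases eq_or_ne i j with rfl | hij
    · simp [add_comm (x i), ← vadd_eq_add, hw]
    · simp [hij]
  refine ⟨fun i => ?_, fun i i' => by rw [hf, hf]; exact hx.2 i i'⟩
  rcases eq_or_ne i j with rfl | hij
  · simpa using hxw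
  · simpa [hij] using hx.1 i

theorem eq_zero_of_mem_extremePoints_fiberProd (hxv : x ∈ extremePoints ℝ (FiberProd d L f))
    (hw : (f j).linear w = 0) (hmove : ∀ᶠ s in 𝓝 (0 : ℝ), x j + s • w ∈ L j) : w = 0 := by
  obtain ⟨ε, hε, hball⟩ := Metric.eventually_nhds_iff.1 hmove
  have hmem : ∀ s : ℝ, |s| < ε → x + Pi.single j (s • w) ∈ FiberProd d L f := fun s hs =>
    add_single_mem_fiberProd hxv.1 (by simp [hw]) (hball (by simpa using hs))
  have hε2 : |ε / 2| < ε := by rw [abs_of_pos (half_pos hε)]; exact half_lt_self hε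
  have hsub : x - Pi.single j ((ε / 2) • w) ∈ FiberProd d L f := by
    simpa [sub_eq_add_neg, ← Pi.single_neg, ← neg_smul] using hmem (-(ε / 2)) (by simpa using hε2)
  have hfix := hxv.2 (hmem _ hε2) hsub (mem_openSegment_add_sub x _)
  simpa [hε.ne'] using hfix

end FiberProd

theorem stmt_9_general {n e : ℕ} (d : Fin n → ℕ)
    (L : ∀ i, Set (Fin (d i) → ℝ)) (hL : ∀ i, StdForm (L i))
    (f : ∀ i, (Fin (d i) → ℝ) →ᵃ[ℝ] (Fin e → ℝ))
    (x : ∀ i, Fin (d i) → ℝ)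
    (hxv : x ∈ Set.extremePoints ℝ (FiberProd d L f))
    (j : Fin n)
    (haff : AffineIndependent ℝ ((↑) : Vsupp (L j) (x j) → (Fin (d j) → ℝ))) :
    Set.InjOn (f j) (Vsupp (L j) (x j)) ∧
      AffineIndependent ℝ ((↑) : (f j '' Vsupp (L j) (x j)) → (Fin e → ℝ)) := by
  obtain ⟨-, k, A, b, hLj⟩ := hL j
  have hker : Disjoint (vectorSpan ℝ (range ((↑) : Vsupp (L j) (x j) → Fin (d j) → ℝ)))
      (LinearMap.ker (f j).linear) := by
    rw [Subtype.range_coe, Submodule.disjoint_def]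
    intro w hwV hwf
    obtain ⟨hAw, hsupp⟩ := mulVec_eq_zero_and_supp_subset_of_mem_vectorSpan_vsupp hLj hwV
    exact eq_zero_of_mem_extremePoints_fiberProd hxv hwf
      (eventually_add_smul_mem_stdForm hLj (hxv.1.1 j) hAw hsupp)
  have hfaff := haff.map_of_disjoint (f j) hker
  refine ⟨Set.injOn_iff_injective.2 hfaff.injective, ?_⟩
  rw [Set.image_eq_range]
  exact hfaff.range

theorem stmt_9 {n e : ℕ} (d : Fin n → ℕ)
    (L : ∀ i, Set (Fin (d i) → ℝ)) (hL : ∀ i, StdForm (L i))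
    (M : Set (Fin e → ℝ)) (hM : IsPolytope M)
    (f : ∀ i, (Fin (d i) → ℝ) →ᵃ[ℝ] (Fin e → ℝ))
    (hf : ∀ i, ∀ y ∈ L i, f i y ∈ M)
    (x : ∀ i, Fin (d i) → ℝ) (hx : x ∈ FiberProd d L f)
    (hxv : x ∈ Set.extremePoints ℝ (FiberProd d L f))
    (j : Fin n)
    (haff : AffineIndependent ℝ ((↑) : Vsupp (L j) (x j) → (Fin (d j) → ℝ))) :
    Set.InjOn (f j) (Vsupp (L j) (x j)) ∧
      AffineIndependent ℝ ((↑) : (f j '' Vsupp (L j) (x j)) → (Fin e → ℝ)) :=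
  stmt_9_general d L hL f x hxv j haff
end

section
/- Let p = (p₁, …, pₙ) ∈ Dist(R_n, m) be a distribution on the rose graph with n loops and m outcomes, and for each k set A_k := {(e_a, e_b) ∈ ℝ^m × ℝ^m : (p_k)_{ab} ≠ 0}. Then p is an extreme point of Dist(R_n, m) if and only if every A_k is affinely independent and the set (⋂_{k=1}^n Conv(A_k)) ∩ {(α, α) ∈ ℝ^m × ℝ^m : Σ_{i=1}^m α_i = 1} consists of a single point. -/
/-- The polytope `Dist(R_n, m)` of distributions on the rose graph with `n`
loops and `m` outcomes: tuples of `m × m` matrices with nonnegative entries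
summing to `1`, such that a single vector `μ` equals both the row-sum vector
and the column-sum vector of every matrix. -/
def RoseDist (n m : ℕ) : Set (Fin n → Matrix (Fin m) (Fin m) ℝ) :=
  {p | (∀ i a b, 0 ≤ p i a b) ∧ (∀ i, ∑ a, ∑ b, p i a b = 1) ∧
       ∃ μ : Fin m → ℝ, ∀ i,
         (∀ a, ∑ b, p i a b = μ a) ∧ (∀ b, ∑ a, p i a b = μ b)}

/-- The set of product-simplex vertices `(e_a, e_b)` corresponding to the
nonzero entries of the `k`-th matrix of `p`. -/
def prodA {n m : ℕ} (p : Fin n → Matrix (Fin m) (Fin m) ℝ) (k : Fin n) :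
    Set ((Fin m → ℝ) × (Fin m → ℝ)) :=
  {v | ∃ a b, p k a b ≠ 0 ∧ v = (Pi.single a 1, Pi.single b 1)}

/-!
The polytope `RoseDist n m` is cut out of the nonnegative orthant by linear equations, so `p` is
extreme iff it is the only point `q` of the polytope whose support lies in that of `p` (otherwise
`p ± t • (q - p)` stays in the polytope for small `t > 0`). Such a `q` with common marginal `ν`
amounts to a choice, for every `k`, of weights `q k` exhibiting `(ν, ν)` as a convex combination
of `prodA p k`. So uniqueness of `q` splits into uniqueness of the point `(ν, ν)` of the
intersection and uniqueness of the weights, i.e. affine independence of each `prodA p k`.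
-/

open Finset

section FiniteFamily

variable {ι : Type*} [Fintype ι] {t : Finset ι}

lemma Finset.sum_coe_eq_sum_of_eq_zero {M : Type*} [AddCommMonoid M] {g : ι → M}
    (hg : ∀ i ∉ t, g i = 0) : ∑ i : (t : Set ι), g i = ∑ i, g i := by
  rw [← sum_subset (subset_univ t) fun i _ hi => hg i hi]
  exact sum_coe_sort t g

variable {R E : Type*} [AddCommGroup E] {f : ι → E}

theorem mem_convexHull_image_finset_iff [Field R] [LinearOrder R] [IsStrictOrderedRing R]
    [Module R E] {x : E} :
    x ∈ convexHull R (f '' t) ↔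
      ∃ w : ι → R, (∀ i, 0 ≤ w i) ∧ (∀ i ∉ t, w i = 0) ∧ ∑ i, w i = 1 ∧
        ∑ i, w i • f i = x := by
  classical
  refine ⟨fun hx => convexHull_min (t := {y | ∃ w : ι → R, (∀ i, 0 ≤ w i) ∧
    (∀ i ∉ t, w i = 0) ∧ ∑ i, w i = 1 ∧ ∑ i, w i • f i = y}) ?_ ?_ hx, ?_⟩
  · rintro _ ⟨i, hi, rfl⟩
    refine ⟨Pi.single i 1, fun j => ?_, fun j hj => ?_, by simp, by simp [Pi.single_apply]⟩
    · rw [Pi.single_apply]; split <;> norm_num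
    · exact Pi.single_eq_of_ne (by rintro rfl; exact hj hi) _
  · rintro _ ⟨w, hw0, hwt, hw1, rfl⟩ _ ⟨w', hw0', hwt', hw1', rfl⟩ a b ha hb hab
    refine ⟨a • w + b • w', fun i => ?_, fun i hi => ?_, ?_, ?_⟩
    · exact add_nonneg (mul_nonneg ha (hw0 i)) (mul_nonneg hb (hw0' i))
    · simp [hwt i hi, hwt' i hi]
    · simp [sum_add_distrib, ← mul_sum, hw1, hw1', hab]
    · simp [add_smul, sum_add_distrib, smul_sum, mul_smul]
  · rintro ⟨w, hw0, hwt, hw1, rfl⟩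
    have hsum : ∑ i ∈ t, w i = 1 := by rwa [sum_subset (subset_univ t) fun i _ hi => hwt i hi]
    rw [← sum_subset (subset_univ t) fun i _ hi => by simp [hwt i hi],
      ← centerMass_eq_of_sum_1 _ _ hsum]
    exact t.centerMass_mem_convexHull (fun i _ => hw0 i) (hsum ▸ one_pos)
      fun i hi => Set.mem_image_of_mem f hi

theorem affineIndependent_image_finset_iff [Ring R] [Module R E] (hf : Function.Injective f) :
    AffineIndependent R ((↑) : f '' t → E) ↔
      ∀ w : ι → R, (∀ i ∉ t, w i = 0) → ∑ i, w i = 0 → ∑ i, w i • f i = 0 → w = 0 := by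
  classical
  rw [← affineIndependent_equiv (Equiv.Set.image f t hf), affineIndependent_iff_of_fintype]
  constructor
  · intro h w hwt hsum hcomb
    funext i
    by_cases hi : i ∈ t
    · have hsum' : ∑ j : (t : Set ι), w j = 0 := by rwa [sum_coe_eq_sum_of_eq_zero hwt]
      refine h (fun j => w j) hsum' ?_ ⟨i, hi⟩
      rw [weightedVSub_eq_linear_combination _ hsum']
      simp only [Function.comp_apply, Equiv.Set.image_apply]
      rwa [sum_coe_eq_sum_of_eq_zero (g := fun j => w j • f j) fun j hj => by simp [hwt j hj]]
    · exact hwt i hi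
  · intro h w hsum hcomb i
    set W : ι → R := fun j => if hj : j ∈ t then w ⟨j, hj⟩ else 0
    have hWt : ∀ j ∉ t, W j = 0 := fun j hj => dif_neg hj
    have hWw : ∀ j : (t : Set ι), W j = w j := fun j => dif_pos j.2
    have := congrFun (h W hWt ?_ ?_) i
    · rwa [hWw] at this
    · rw [← sum_coe_eq_sum_of_eq_zero hWt]
      exact (sum_congr rfl fun j _ => hWw j).trans hsum
    · rw [← sum_coe_eq_sum_of_eq_zero (g := fun j => W j • f j) fun j hj => by simp [hWt j hj]]
      rw [weightedVSub_eq_linear_combination _ hsum] at hcomb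
      exact (sum_congr rfl fun j _ => by rw [hWw]; rfl).trans hcomb

end FiniteFamily

open Filter Topology in
lemma eventually_nonneg_add_mul {x y : ℝ} (hx : 0 ≤ x) (hxy : x = 0 → y = 0) :
    ∀ᶠ t in 𝓝 (0 : ℝ), 0 ≤ x + t * y := by
  rcases hx.eq_or_lt with rfl | hpos
  · simp [hxy rfl]
  · have hlim : Tendsto (fun t => x + t * y) (𝓝 0) (𝓝 x) := by
      simpa using ((tendsto_id (x := 𝓝 (0 : ℝ))).mul_const y).const_add x
    exact (hlim.eventually (lt_mem_nhds hpos)).mono fun _ => le_of_lt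

section RoseDist

variable {n m : ℕ} {p q d : Fin n → Matrix (Fin m) (Fin m) ℝ}

def IsRoseDirection (d : Fin n → Matrix (Fin m) (Fin m) ℝ) : Prop :=
  (∀ i, ∑ a, ∑ b, d i a b = 0) ∧
    ∃ ν : Fin m → ℝ, ∀ i, (∀ a, ∑ b, d i a b = ν a) ∧ (∀ b, ∑ a, d i a b = ν b)

lemma isRoseDirection_sub (hp : p ∈ RoseDist n m) (hq : q ∈ RoseDist n m) :
    IsRoseDirection (q - p) := by
  obtain ⟨-, hp1, μ, hμ⟩ := hp
  obtain ⟨-, hq1, ν, hν⟩ := hq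
  refine ⟨fun i => by simp [sum_sub_distrib, hp1, hq1], ν - μ,
    fun i => ⟨fun a => ?_, fun b => ?_⟩⟩
  · simp [sum_sub_distrib, (hμ i).1, (hν i).1]
  · simp [sum_sub_distrib, (hμ i).2, (hν i).2]

lemma isRoseDirection_single {k : Fin n} {M : Matrix (Fin m) (Fin m) ℝ}
    (hrow : ∀ a, ∑ b, M a b = 0) (hcol : ∀ b, ∑ a, M a b = 0) :
    IsRoseDirection (Pi.single k M) := by
  refine ⟨fun i => ?_, 0, fun i => ⟨fun a => ?_, fun b => ?_⟩⟩ <;>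
    rcases eq_or_ne i k with rfl | hik <;> simp [*]

lemma add_smul_mem_roseDist (hp : p ∈ RoseDist n m) (hd : IsRoseDirection d) {t : ℝ}
    (h0 : ∀ i a b, 0 ≤ p i a b + t * d i a b) : p + t • d ∈ RoseDist n m := by
  obtain ⟨-, hp1, μ, hμ⟩ := hp
  obtain ⟨hd1, ν, hν⟩ := hd
  refine ⟨by simpa using h0, fun i => ?_, μ + t • ν, fun i => ⟨fun a => ?_, fun b => ?_⟩⟩
  · simp [sum_add_distrib, ← mul_sum, hp1, hd1]
  · simp [sum_add_distrib, ← mul_sum, (hμ i).1, (hν i).1]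
  · simp [sum_add_distrib, ← mul_sum, (hμ i).2, (hν i).2]

open Filter Topology in
lemma exists_add_smul_mem_roseDist (hp : p ∈ RoseDist n m) (hd : IsRoseDirection d)
    (hdp : ∀ i a b, p i a b = 0 → d i a b = 0) :
    ∃ t : ℝ, 0 < t ∧ p + t • d ∈ RoseDist n m ∧ p + (-t) • d ∈ RoseDist n m := by
  have hev : ∀ᶠ t in 𝓝 (0 : ℝ), ∀ i a b, 0 ≤ p i a b + t * d i a b :=
    eventually_all.2 fun i => eventually_all.2 fun a => eventually_all.2 fun b =>
      eventually_nonneg_add_mul (hp.1 i a b) (hdp i a b)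
  have hev' : ∀ᶠ t in 𝓝 (0 : ℝ), ∀ i a b, 0 ≤ p i a b + (-t) * d i a b :=
    (continuous_neg.tendsto' 0 0 neg_zero).eventually hev
  obtain ⟨t, ⟨h, h'⟩, ht⟩ := (((hev.and hev').filter_mono nhdsWithin_le_nhds).and
    (self_mem_nhdsWithin (s := Set.Ioi 0))).exists
  exact ⟨t, ht, add_smul_mem_roseDist hp hd h, add_smul_mem_roseDist hp hd h'⟩

theorem mem_extremePoints_roseDist_iff (hp : p ∈ RoseDist n m) :
    p ∈ (RoseDist n m).extremePoints ℝ ↔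
      ∀ q ∈ RoseDist n m, (∀ i a b, p i a b = 0 → q i a b = 0) → q = p := by
  constructor
  · intro hext q hq hqp
    obtain ⟨t, ht, hplus, hminus⟩ := exists_add_smul_mem_roseDist hp (isRoseDirection_sub hp hq)
      fun i a b h => by simp [h, hqp i a b h]
    have hmid : p ∈ openSegment ℝ (p + t • (q - p)) (p + (-t) • (q - p)) :=
      ⟨1 / 2, 1 / 2, by norm_num, by norm_num, by norm_num, by module⟩
    have := hext.2 hplus hminus hmid
    simpa [ht.ne', sub_eq_zero] using this
  · intro huniq
    refine ⟨hp, fun x hx y hy ⟨a, b, ha, hb, hab, hxy⟩ => huniq x hx fun i c e h => ?_⟩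
    have hsum : a * x i c e + b * y i c e = 0 := by
      simpa [h] using congr_fun (congr_fun (congr_fun hxy i) c) e
    have := (add_eq_zero_iff_of_nonneg (mul_nonneg ha.le (hx.1 i c e))
      (mul_nonneg hb.le (hy.1 i c e))).1 hsum
    exact (mul_eq_zero.1 this.1).resolve_left ha.ne'

end RoseDist

section ProdA

variable {n m : ℕ} {p : Fin n → Matrix (Fin m) (Fin m) ℝ} {k : Fin n}

def prodVertex (ab : Fin m × Fin m) : (Fin m → ℝ) × (Fin m → ℝ) :=
  (Pi.single ab.1 1, Pi.single ab.2 1)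

lemma prodVertex_injective : Function.Injective (prodVertex (m := m)) := by
  rintro ⟨a, b⟩ ⟨a', b'⟩ h
  have ha := congr_fun (congr_arg Prod.fst h) a
  have hb := congr_fun (congr_arg Prod.snd h) b
  simp only [prodVertex, Pi.single_apply] at ha hb
  simp_all

lemma sum_smul_prodVertex (w : Fin m × Fin m → ℝ) :
    ∑ ab, w ab • prodVertex ab = (fun a => ∑ b, w (a, b), fun b => ∑ a, w (a, b)) := by
  ext c
  · simp [prodVertex, Fintype.sum_prod_type, Prod.fst_sum, Finset.sum_apply, Pi.single_apply]
  · simp [prodVertex, Fintype.sum_prod_type_right, Prod.snd_sum, Finset.sum_apply,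
      Pi.single_apply]

lemma prodA_eq_image :
    prodA p k = prodVertex '' ↑({ab | p k ab.1 ab.2 ≠ 0} : Finset (Fin m × Fin m)) := by
  ext v
  simp [prodA, prodVertex, eq_comm]

theorem mem_convexHull_prodA_iff {v : (Fin m → ℝ) × (Fin m → ℝ)} :
    v ∈ convexHull ℝ (prodA p k) ↔
      ∃ M : Matrix (Fin m) (Fin m) ℝ, (∀ a b, 0 ≤ M a b) ∧ (∀ a b, p k a b = 0 → M a b = 0) ∧
        ∑ a, ∑ b, M a b = 1 ∧ (∀ a, ∑ b, M a b = v.1 a) ∧ ∀ b, ∑ a, M a b = v.2 b := by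
  rw [prodA_eq_image, mem_convexHull_image_finset_iff]
  constructor
  · rintro ⟨w, hw0, hwp, hw1, rfl⟩
    refine ⟨fun a b => w (a, b), fun a b => hw0 _, fun a b h => hwp _ (by simpa using h),
      by rwa [← Fintype.sum_prod_type], fun a => ?_, fun b => ?_⟩ <;> simp [sum_smul_prodVertex]
  · rintro ⟨M, hM0, hMp, hM1, hrow, hcol⟩
    refine ⟨fun ab => M ab.1 ab.2, fun ab => hM0 _ _, fun ab h => hMp _ _ (by simpa using h),
      by rwa [Fintype.sum_prod_type], ?_⟩
    rw [sum_smul_prodVertex]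
    ext c
    exacts [hrow c, hcol c]

theorem affineIndependent_prodA_iff :
    AffineIndependent ℝ ((↑) : prodA p k → (Fin m → ℝ) × (Fin m → ℝ)) ↔
      ∀ M : Matrix (Fin m) (Fin m) ℝ, (∀ a b, p k a b = 0 → M a b = 0) →
        (∀ a, ∑ b, M a b = 0) → (∀ b, ∑ a, M a b = 0) → M = 0 := by
  rw [prodA_eq_image, affineIndependent_image_finset_iff prodVertex_injective]
  constructor
  · intro h M hMp hrow hcol
    have := h (fun ab => M ab.1 ab.2) (fun ab h => hMp _ _ (by simpa using h))
      (by simp [Fintype.sum_prod_type, hrow]) (by simp [sum_smul_prodVertex, hrow, hcol]; rfl)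
    ext a b
    exact congr_fun this (a, b)
  · intro h w hwp hw0 hw1
    rw [sum_smul_prodVertex, Prod.mk_eq_zero] at hw1
    have := h (fun a b => w (a, b)) (fun a b h => hwp _ (by simpa using h))
      (congr_fun hw1.1) (congr_fun hw1.2)
    ext ab
    exact congr_fun (congr_fun this ab.1) ab.2

theorem mem_iInter_convexHull_prodA_inter_iff (hn : 1 ≤ n) {ν : Fin m → ℝ} :
    (ν, ν) ∈ (⋂ k, convexHull ℝ (prodA p k)) ∩
        {v : (Fin m → ℝ) × (Fin m → ℝ) | v.1 = v.2 ∧ ∑ i, v.1 i = 1} ↔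
      ∃ q ∈ RoseDist n m, (∀ k a b, p k a b = 0 → q k a b = 0) ∧ ∀ k a, ∑ b, q k a b = ν a := by
  simp only [Set.mem_inter_iff, Set.mem_iInter, mem_convexHull_prodA_iff, Set.mem_ofPred_eq,
    true_and]
  constructor
  · rintro ⟨hM, -⟩
    choose M hM0 hMp hM1 hrow hcol using hM
    exact ⟨M, ⟨hM0, hM1, ν, fun k => ⟨hrow k, hcol k⟩⟩, hMp, hrow⟩
  · rintro ⟨q, ⟨hq0, hq1, μ, hμ⟩, hqp, hqν⟩
    have hμν : μ = ν := funext fun a => ((hμ ⟨0, hn⟩).1 a).symm.trans (hqν ⟨0, hn⟩ a)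
    subst hμν
    refine ⟨fun k => ⟨q k, hq0 k, hqp k, hq1 k, (hμ k).1, (hμ k).2⟩, ?_⟩
    rw [← hq1 ⟨0, hn⟩]
    exact sum_congr rfl fun a _ => ((hμ ⟨0, hn⟩).1 a).symm

theorem affineIndependent_prodA_of_forall_eq (hp : p ∈ RoseDist n m)
    (huniq : ∀ q ∈ RoseDist n m, (∀ i a b, p i a b = 0 → q i a b = 0) → q = p) (k : Fin n) :
    AffineIndependent ℝ ((↑) : prodA p k → (Fin m → ℝ) × (Fin m → ℝ)) := by
  refine affineIndependent_prodA_iff.2 fun M hMp hrow hcol => ?_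
  have hdp : ∀ i a b, p i a b = 0 →
      (Pi.single k M : Fin n → Matrix (Fin m) (Fin m) ℝ) i a b = 0 := by
    intro i a b h
    rcases eq_or_ne i k with rfl | hik
    · simpa using hMp a b h
    · simp [hik]
  obtain ⟨t, ht, hq, -⟩ :=
    exists_add_smul_mem_roseDist hp (isRoseDirection_single hrow hcol) hdp
  have := congr_fun (huniq _ hq fun i a b h => by simp [h, hdp i a b h]) k
  simpa [ht.ne'] using this

theorem eq_of_affineIndependent_prodA
    (hAI : ∀ k, AffineIndependent ℝ ((↑) : prodA p k → (Fin m → ℝ) × (Fin m → ℝ)))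
    {q : Fin n → Matrix (Fin m) (Fin m) ℝ} {μ : Fin m → ℝ}
    (hμp : ∀ k, (∀ a, ∑ b, p k a b = μ a) ∧ ∀ b, ∑ a, p k a b = μ b)
    (hμq : ∀ k, (∀ a, ∑ b, q k a b = μ a) ∧ ∀ b, ∑ a, q k a b = μ b)
    (hqp : ∀ k a b, p k a b = 0 → q k a b = 0) : q = p := by
  funext k
  refine sub_eq_zero.1 (affineIndependent_prodA_iff.1 (hAI k) (q k - p k)
    (fun a b h => by simp [h, hqp k a b h]) (fun a => ?_) (fun b => ?_))
  · simp [sum_sub_distrib, (hμq k).1, (hμp k).1]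
  · simp [sum_sub_distrib, (hμq k).2, (hμp k).2]

end ProdA

theorem stmt_12_general {n m : ℕ} (hn : 1 ≤ n)
    (p : Fin n → Matrix (Fin m) (Fin m) ℝ) (hp : p ∈ RoseDist n m) :
    p ∈ Set.extremePoints ℝ (RoseDist n m) ↔
      (∀ k, AffineIndependent ℝ ((↑) : prodA p k → ((Fin m → ℝ) × (Fin m → ℝ)))) ∧
      ∃ u, ((⋂ k, convexHull ℝ (prodA p k)) ∩
            {v : (Fin m → ℝ) × (Fin m → ℝ) | v.1 = v.2 ∧ ∑ i, v.1 i = 1}) = {u} := by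
  obtain ⟨-, -, μ, hμ⟩ := id hp
  have hpI := (mem_iInter_convexHull_prodA_inter_iff hn).2
    ⟨p, hp, fun _ _ _ h => h, fun k => (hμ k).1⟩
  rw [mem_extremePoints_roseDist_iff hp]
  constructor
  · intro huniq
    refine ⟨affineIndependent_prodA_of_forall_eq hp huniq, (μ, μ),
      Set.eq_singleton_iff_unique_mem.2 ⟨hpI, ?_⟩⟩
    rintro ⟨ν, ν'⟩ hvI
    obtain rfl : ν = ν' := hvI.2.1
    obtain ⟨q, hq, hqp, hqν⟩ := (mem_iInter_convexHull_prodA_inter_iff hn).1 hvI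
    obtain rfl : q = p := huniq q hq hqp
    obtain rfl : ν = μ := funext fun a => (hqν ⟨0, hn⟩ a).symm.trans ((hμ _).1 a)
    rfl
  · rintro ⟨hAI, u, hu⟩ q hq hqp
    obtain ⟨-, -, ν, hν⟩ := id hq
    have hqI := (mem_iInter_convexHull_prodA_inter_iff hn).2 ⟨q, hq, hqp, fun k => (hν k).1⟩
    rw [hu] at hpI hqI
    obtain rfl : ν = μ := congr_arg Prod.fst (hqI.trans hpI.symm)
    exact eq_of_affineIndependent_prodA hAI hμ hν hqp

theorem stmt_12 {n m : ℕ} (hn : 1 ≤ n) (hm : 2 ≤ m)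
    (p : Fin n → Matrix (Fin m) (Fin m) ℝ) (hp : p ∈ RoseDist n m) :
    p ∈ Set.extremePoints ℝ (RoseDist n m) ↔
      (∀ k, AffineIndependent ℝ ((↑) : prodA p k → ((Fin m → ℝ) × (Fin m → ℝ)))) ∧
      ∃ u, ((⋂ k, convexHull ℝ (prodA p k)) ∩
            {v : (Fin m → ℝ) × (Fin m → ℝ) | v.1 = v.2 ∧ ∑ i, v.1 i = 1}) = {u} :=
  stmt_12_general hn p hp
end
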